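/- arXiv:0906.3445 — 4 statements merged into one kernel-verified Lean document; each statement's English description precedes it below -/
import Mathlib

section
/- If an alternating sign matrix of even size n is invariant under rotation by a quarter turn, then n is divisible by 4. In particular, for every integer N ≥ 0 there exists no quarter-turn symmetric ASM of size 4N+2. -/
/-- An alternating sign matrix of size `n`: entries in `{-1,0,1}`, and in every
row and column the nonzero entries alternate in sign and sum to `1`
(equivalently, all partial sums along rows and columns lie in `{0,1}` and
each full row and column sums to `1`). -/
def IsASM (n : ℕ) (M : Matrix (Fin n) (Fin n) ℤ) : Prop :=
  (∀ i j : Fin n, M i j = -1 ∨ M i j = 0 ∨ M i j = 1) ∧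
  (∀ i j : Fin n, (∑ k ∈ Finset.Iic j, M i k) = 0 ∨ (∑ k ∈ Finset.Iic j, M i k) = 1) ∧
  (∀ i j : Fin n, (∑ k ∈ Finset.Iic i, M k j) = 0 ∨ (∑ k ∈ Finset.Iic i, M k j) = 1) ∧
  (∀ i : Fin n, (∑ j, M i j) = 1) ∧
  (∀ j : Fin n, (∑ i, M i j) = 1)

/-- `A(n)`: the number of ASMs of size `n`. -/
noncomputable def numASM (n : ℕ) : ℕ :=
  Nat.card {M : Matrix (Fin n) (Fin n) ℤ // IsASM n M}

/-- Half-turn symmetry: `M_{i,j} = M_{n+1-i,n+1-j}`. -/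
def IsHT (n : ℕ) (M : Matrix (Fin n) (Fin n) ℤ) : Prop :=
  ∀ i j : Fin n, M i j = M i.rev j.rev

/-- `A_HT(n)`: the number of half-turn symmetric ASMs of size `n`. -/
noncomputable def numHTASM (n : ℕ) : ℕ :=
  Nat.card {M : Matrix (Fin n) (Fin n) ℤ // IsASM n M ∧ IsHT n M}

/-- Quarter-turn symmetry: `M_{i,j} = M_{j,n+1-i}`. -/
def IsQT (n : ℕ) (M : Matrix (Fin n) (Fin n) ℤ) : Prop :=
  ∀ i j : Fin n, M i j = M j i.rev

/-- `A_QT(n)`: the number of quarter-turn symmetric ASMs of size `n`. -/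
noncomputable def numQTASM (n : ℕ) : ℕ :=
  Nat.card {M : Matrix (Fin n) (Fin n) ℤ // IsASM n M ∧ IsQT n M}

/-!
Split a quarter-turn symmetric matrix of size `2m` into four `m × m` blocks. The rotation carries
the top-right block onto the top-left one, so both have the same entry sum `S`. If every row sums
to `1`, adding up the top `m` rows gives `m = 2 S`, hence `4 ∣ 2m`.
-/

lemma Fin.castAdd_rev_rev_eq_natAdd {m : ℕ} (j : Fin m) :
    (Fin.castAdd m j.rev).rev = Fin.natAdd m j := by
  ext
  simp only [Fin.val_rev, Fin.val_castAdd, Fin.val_natAdd]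
  omega

namespace IsQT

variable {m : ℕ} {M : Matrix (Fin (m + m)) (Fin (m + m)) ℤ}

lemma sum_topRight_eq_sum_topLeft (hQ : IsQT (m + m) M) :
    ∑ i : Fin m, ∑ j : Fin m, M (Fin.castAdd m i) (Fin.natAdd m j) =
      ∑ i : Fin m, ∑ j : Fin m, M (Fin.castAdd m i) (Fin.castAdd m j) := by
  calc ∑ i : Fin m, ∑ j : Fin m, M (Fin.castAdd m i) (Fin.natAdd m j)
      = ∑ i : Fin m, ∑ j : Fin m, M (Fin.castAdd m j.rev) (Fin.castAdd m i) := by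
        simp only [hQ (Fin.castAdd m _) (Fin.castAdd m _), Fin.castAdd_rev_rev_eq_natAdd]
    _ = ∑ j : Fin m, ∑ i : Fin m, M (Fin.castAdd m j.rev) (Fin.castAdd m i) := Finset.sum_comm
    _ = ∑ j : Fin m, ∑ i : Fin m, M (Fin.castAdd m j) (Fin.castAdd m i) :=
        Equiv.sum_comp Fin.revPerm fun j => ∑ i : Fin m, M (Fin.castAdd m j) (Fin.castAdd m i)

lemma four_dvd_of_row_sums_eq_one (hQ : IsQT (m + m) M) (hrow : ∀ i, ∑ j, M i j = 1) :
    4 ∣ m + m := by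
  set S := ∑ i : Fin m, ∑ j : Fin m, M (Fin.castAdd m i) (Fin.castAdd m j)
  have htop : (m : ℤ) = 2 * S :=
    calc (m : ℤ) = ∑ i : Fin m, ∑ j, M (Fin.castAdd m i) j := by simp [hrow]
      _ = S + ∑ i : Fin m, ∑ j : Fin m, M (Fin.castAdd m i) (Fin.natAdd m j) := by
        simp only [Fin.sum_univ_add, Finset.sum_add_distrib, S]
      _ = 2 * S := by rw [hQ.sum_topRight_eq_sum_topLeft]; ring
  have : ((m + m : ℕ) : ℤ) = 4 * S := by push_cast; omega
  exact_mod_cast Dvd.intro S this.symm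

end IsQT

/-- If an ASM of even size `n` is quarter-turn symmetric, then `4 ∣ n`;
in particular there is no quarter-turn symmetric ASM of size `4N+2`. -/
theorem no_QTASM_of_size_4N_add_two :
    (∀ (n : ℕ) (M : Matrix (Fin n) (Fin n) ℤ), Even n → IsASM n M → IsQT n M → 4 ∣ n) ∧
    (∀ N : ℕ, ¬ ∃ M : Matrix (Fin (4*N+2)) (Fin (4*N+2)) ℤ,
      IsASM (4*N+2) M ∧ IsQT (4*N+2) M) := by
  have four_dvd : ∀ (n : ℕ) (M : Matrix (Fin n) (Fin n) ℤ),
      Even n → IsASM n M → IsQT n M → 4 ∣ n := by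
    rintro n M ⟨m, rfl⟩ hA hQ
    exact hQ.four_dvd_of_row_sums_eq_one hA.2.2.2.1
  refine ⟨four_dvd, fun N ⟨M, hA, hQ⟩ => ?_⟩
  have := four_dvd _ M ⟨2 * N + 1, by ring⟩ hA hQ
  omega
end

section
/- For every integer N ≥ 1, every nonzero complex number a and all nonzero complex numbers x₂,…,x_{2N}, the specialization x₁ = a⁻¹·x_{N+1} of the partition function satisfies Z(N; a⁻¹x_{N+1}, x₂,…,x_{2N}) = [Π_{2≤k≤N} σ(a·x_{N+1}/x_k)]·[Π_{N+1≤k≤2N} σ(a²·x_k/x_{N+1})]·Z(N−1; x₂,…,x_N, x_{N+2},…,x_{2N}), where Z(0) = 1. -/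
/-!
Under `x₁ = a⁻¹ x_{N+1}`, a `0` in the top-left corner (where both partial sums vanish) has
weight `σ(a x₁ / x_{N+1}) = σ(a a⁻¹) = 0`. So only ASMs with a `1` in the corner contribute, and
these are exactly the ASMs of size `N - 1` bordered by a first row and column `(1, 0, …, 0)`.
The first row contributes `σ(a²) ∏_{k ≥ 2} σ(a x_{N+k} / x₁) = ∏_k σ(a² x_{N+k} / x_{N+1})`, the
first column `∏_{k ≥ 2} σ(a x_{N+1} / x_k)`, and inside the lower-right block the partial sums
are those of the smaller ASM, so the block contributes its weight in the remaining variables.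
-/

noncomputable section

/-- `σ(x) = x - x⁻¹`. -/
def sig (x : ℂ) : ℂ := x - x⁻¹

/-- The type of possible ASM entries: `{-1, 0, 1} ⊆ ℤ`. -/
abbrev ASMEntry : Type := ({-1, 0, 1} : Finset ℤ)

/-- An alternating sign matrix of size `N` (with entries recorded in `{-1,0,1}`):
in every row and column the nonzero entries alternate in sign and sum to `1`
(equivalently, all partial sums along rows and columns lie in `{0,1}` and each
full row and column sums to `1`). -/
def IsASMFun (N : ℕ) (M : Fin N → Fin N → ASMEntry) : Prop :=
  (∀ i j : Fin N, (∑ k ∈ Finset.Iic j, (M i k : ℤ)) = 0 ∨ (∑ k ∈ Finset.Iic j, (M i k : ℤ)) = 1) ∧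
  (∀ i j : Fin N, (∑ k ∈ Finset.Iic i, (M k j : ℤ)) = 0 ∨ (∑ k ∈ Finset.Iic i, (M k j : ℤ)) = 1) ∧
  (∀ i : Fin N, (∑ j, (M i j : ℤ)) = 1) ∧
  (∀ j : Fin N, (∑ i, (M i j : ℤ)) = 1)

instance (N : ℕ) : DecidablePred (IsASMFun N) := fun M => by
  unfold IsASMFun; infer_instance

/-- The (finite) type of ASMs of size `N`. -/
def ASMt (N : ℕ) : Type := {M : Fin N → Fin N → ASMEntry // IsASMFun N M}

instance (N : ℕ) : Fintype (ASMt N) := Subtype.fintype _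

/-- The index (in `Fin (2N)`) of the variable `xᵢ` attached to row `i`. -/
def rowIdx {N : ℕ} (i : Fin N) : Fin (2*N) := ⟨i.1, by have := i.isLt; omega⟩

/-- The index (in `Fin (2N)`) of the variable `x_{N+j}` attached to column `j`. -/
def colIdx {N : ℕ} (j : Fin N) : Fin (2*N) := ⟨N + j.1, by have := j.isLt; omega⟩

/-- The weight of position `(i,j)` of the ASM `M`, for the square-ice model with
parameter `a` and spectral parameters `X`: `σ(a²)` at nonzero entries; at a zero
entry it is `σ(a·x_{N+j}/xᵢ)` if the row and column partial sums differ there,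
and `σ(a·xᵢ/x_{N+j})` if they agree. -/
def weight (a : ℂ) {N : ℕ} (X : Fin (2*N) → ℂ) (M : Fin N → Fin N → ASMEntry)
    (i j : Fin N) : ℂ :=
  if (M i j : ℤ) ≠ 0 then sig (a ^ 2)
  else if (∑ k ∈ Finset.Iic j, (M i k : ℤ)) ≠ (∑ k ∈ Finset.Iic i, (M k j : ℤ)) then
    sig (a * X (colIdx j) / X (rowIdx i))
  else
    sig (a * X (rowIdx i) / X (colIdx j))

/-- The square-ice partition function with domain-wall boundary:
`Z(N; x₁, …, x_{2N}) = Σ_M Π_{i,j} weight(i,j)`, summed over all ASMs of size `N`. -/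
def Z (a : ℂ) (N : ℕ) (X : Fin (2*N) → ℂ) : ℂ :=
  ∑ M : ASMt N, ∏ i : Fin N, ∏ j : Fin N, weight a X M.1 i j


open Finset

namespace Fin

variable {M : Type*} [AddCommMonoid M] {n : ℕ}

theorem sum_Iic_zero (f : Fin (n + 1) → M) : ∑ k ∈ Iic 0, f k = f 0 := by
  simp [← bot_eq_zero, Iic_bot]

theorem sum_Iic_succ (f : Fin (n + 1) → M) (j : Fin n) :
    ∑ k ∈ Iic j.succ, f k = f 0 + ∑ k ∈ Iic j, f k.succ := by
  rw [← bot_eq_zero, ← Icc_bot, ← Ioc_insert_left bot_le, sum_insert (by simp), bot_eq_zero,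
    ← map_succEmb_Iic, sum_map]
  rfl

theorem prod_filter_val_ne_zero {M : Type*} [CommMonoid M] (f : Fin (n + 1) → M) :
    ∏ k ∈ univ.filter (fun k : Fin (n + 1) => k.1 ≠ 0), f k = ∏ i : Fin n, f i.succ := by
  simp [prod_filter, Fin.prod_univ_succ]

end Fin

theorem sig_mul_inv_self (a : ℂ) : sig (a * a⁻¹) = 0 := by
  rcases eq_or_ne a 0 with rfl | ha <;> simp [sig, *]

namespace ASMEntry

def zero : ASMEntry := ⟨0, by simp⟩

def one : ASMEntry := ⟨1, by simp⟩

@[simp] theorem coe_zero : (zero : ℤ) = 0 := rfl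

@[simp] theorem coe_one : (one : ℤ) = 1 := rfl

end ASMEntry

section Corner

variable {n : ℕ}

def cornerExtend (M : Fin n → Fin n → ASMEntry) : Fin (n + 1) → Fin (n + 1) → ASMEntry :=
  Fin.cons (Fin.cons .one fun _ => .zero) fun i => Fin.cons .zero (M i)

def cornerMinor (M : Fin (n + 1) → Fin (n + 1) → ASMEntry) : Fin n → Fin n → ASMEntry :=
  fun i j => M i.succ j.succ

variable (M : Fin n → Fin n → ASMEntry)

@[simp] theorem cornerExtend_zero_zero : cornerExtend M 0 0 = .one := rfl

@[simp] theorem cornerExtend_zero_succ (j : Fin n) : cornerExtend M 0 j.succ = .zero := rfl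

@[simp] theorem cornerExtend_succ_zero (i : Fin n) : cornerExtend M i.succ 0 = .zero := rfl

@[simp] theorem cornerExtend_succ_succ (i j : Fin n) : cornerExtend M i.succ j.succ = M i j := rfl

theorem cornerMinor_cornerExtend : cornerMinor (cornerExtend M) = M := rfl

theorem cornerExtend_rowSum_zero (j : Fin (n + 1)) :
    ∑ k ∈ Iic j, (cornerExtend M 0 k : ℤ) = 1 := by
  cases j using Fin.cases <;> simp [Fin.sum_Iic_zero, Fin.sum_Iic_succ]

theorem cornerExtend_colSum_zero (i : Fin (n + 1)) :
    ∑ k ∈ Iic i, (cornerExtend M k 0 : ℤ) = 1 := by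
  cases i using Fin.cases <;> simp [Fin.sum_Iic_zero, Fin.sum_Iic_succ]

theorem cornerExtend_rowSum_succ_succ (i j : Fin n) :
    ∑ k ∈ Iic j.succ, (cornerExtend M i.succ k : ℤ) = ∑ k ∈ Iic j, (M i k : ℤ) := by
  simp [Fin.sum_Iic_succ]

theorem cornerExtend_colSum_succ_succ (i j : Fin n) :
    ∑ k ∈ Iic i.succ, (cornerExtend M k j.succ : ℤ) = ∑ k ∈ Iic i, (M k j : ℤ) := by
  simp [Fin.sum_Iic_succ]

end Corner

namespace IsASMFun

variable {n : ℕ}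

theorem transpose {M : Fin n → Fin n → ASMEntry} (h : IsASMFun n M) :
    IsASMFun n fun i j => M j i :=
  ⟨fun i j => h.2.1 j i, fun i j => h.1 j i, h.2.2.2, h.2.2.1⟩

variable {M : Fin (n + 1) → Fin (n + 1) → ASMEntry}

theorem corner_eq_zero_of_ne_one (h : IsASMFun (n + 1) M) (h00 : (M 0 0 : ℤ) ≠ 1) :
    (M 0 0 : ℤ) = 0 := by
  have := h.1 0 0
  rw [Fin.sum_Iic_zero] at this
  omega

theorem first_row_succ_eq_zero (h : IsASMFun (n + 1) M) (h00 : (M 0 0 : ℤ) = 1)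
    (j : Fin n) : (M 0 j.succ : ℤ) = 0 := by
  have nonneg (j : Fin (n + 1)) : 0 ≤ (M 0 j : ℤ) := by
    have := h.2.1 0 j
    rw [Fin.sum_Iic_zero] at this
    omega
  have rest : ∑ j : Fin n, (M 0 j.succ : ℤ) = 0 := by
    have := h.2.2.1 0
    rw [Fin.sum_univ_succ, h00] at this
    omega
  exact (sum_eq_zero_iff_of_nonneg fun j _ => nonneg j.succ).mp rest j (mem_univ j)

theorem first_col_succ_eq_zero (h : IsASMFun (n + 1) M) (h00 : (M 0 0 : ℤ) = 1)
    (i : Fin n) : (M i.succ 0 : ℤ) = 0 :=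
  h.transpose.first_row_succ_eq_zero h00 i

theorem cornerMinor_rowSum (h : IsASMFun (n + 1) M) (h00 : (M 0 0 : ℤ) = 1) (i j : Fin n) :
    ∑ k ∈ Iic j, (cornerMinor M i k : ℤ) = ∑ k ∈ Iic j.succ, (M i.succ k : ℤ) := by
  rw [Fin.sum_Iic_succ, h.first_col_succ_eq_zero h00, zero_add]
  rfl

theorem cornerMinor_colSum (h : IsASMFun (n + 1) M) (h00 : (M 0 0 : ℤ) = 1) (i j : Fin n) :
    ∑ k ∈ Iic i, (cornerMinor M k j : ℤ) = ∑ k ∈ Iic i.succ, (M k j.succ : ℤ) := by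
  rw [Fin.sum_Iic_succ, h.first_row_succ_eq_zero h00, zero_add]
  rfl

theorem cornerMinor (h : IsASMFun (n + 1) M) (h00 : (M 0 0 : ℤ) = 1) :
    IsASMFun n (cornerMinor M) := by
  refine ⟨fun i j => ?_, fun i j => ?_, fun i => ?_, fun j => ?_⟩
  · rw [h.cornerMinor_rowSum h00]
    exact h.1 i.succ j.succ
  · rw [h.cornerMinor_colSum h00]
    exact h.2.1 i.succ j.succ
  · simpa [Fin.sum_univ_succ, h.first_col_succ_eq_zero h00, _root_.cornerMinor]
      using h.2.2.1 i.succ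
  · simpa [Fin.sum_univ_succ, h.first_row_succ_eq_zero h00, _root_.cornerMinor]
      using h.2.2.2 j.succ

theorem cornerExtend {M : Fin n → Fin n → ASMEntry} (h : IsASMFun n M) :
    IsASMFun (n + 1) (cornerExtend M) := by
  refine ⟨fun i j => ?_, fun i j => ?_, fun i => ?_, fun j => ?_⟩
  · cases i using Fin.cases with
    | zero => exact .inr (cornerExtend_rowSum_zero M j)
    | succ i =>
      cases j using Fin.cases with
      | zero => simp [Fin.sum_Iic_zero]
      | succ j => simpa [cornerExtend_rowSum_succ_succ] using h.1 i j
  · cases j using Fin.cases with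
    | zero => exact .inr (cornerExtend_colSum_zero M i)
    | succ j =>
      cases i using Fin.cases with
      | zero => simp [Fin.sum_Iic_zero]
      | succ i => simpa [cornerExtend_colSum_succ_succ] using h.2.1 i j
  · cases i using Fin.cases <;> simp [Fin.sum_univ_succ, h.2.2.1]
  · cases j using Fin.cases <;> simp [Fin.sum_univ_succ, h.2.2.2]

end IsASMFun

theorem cornerExtend_cornerMinor {n : ℕ} {M : Fin (n + 1) → Fin (n + 1) → ASMEntry}
    (h : IsASMFun (n + 1) M) (h00 : (M 0 0 : ℤ) = 1) : cornerExtend (cornerMinor M) = M := by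
  funext i j
  apply Subtype.ext
  cases i using Fin.cases <;> cases j using Fin.cases
  · exact h00.symm
  · exact (h.first_row_succ_eq_zero h00 _).symm
  · exact (h.first_col_succ_eq_zero h00 _).symm
  · rfl

def ASMt.cornerExtend {n : ℕ} : ASMt n ↪ ASMt (n + 1) where
  toFun M := ⟨_root_.cornerExtend M.1, M.2.cornerExtend⟩
  inj' _ _ hMM' := Subtype.ext (congrArg (fun M : ASMt (n + 1) => cornerMinor M.1) hMM')

theorem ASMt.mem_map_cornerExtend {n : ℕ} {M : ASMt (n + 1)} (h00 : (M.1 0 0 : ℤ) = 1) :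
    M ∈ univ.map ASMt.cornerExtend :=
  mem_map.mpr ⟨⟨cornerMinor M.1, M.2.cornerMinor h00⟩, mem_univ _,
    Subtype.ext (cornerExtend_cornerMinor M.2 h00)⟩

/-- The spectral parameters left after deleting `x₁` and `x_{N+1}`. -/
def minorVars {α : Type*} {n : ℕ} (X : Fin (2 * (n + 1)) → α) : Fin (2 * n) → α := fun k =>
  if k.1 < n then X ⟨k.1 + 1, by omega⟩ else X ⟨k.1 + 2, by omega⟩

section MinorVars

variable {α : Type*} {n : ℕ}

theorem minorVars_rowIdx (X : Fin (2 * (n + 1)) → α) (i : Fin n) :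
    minorVars X (rowIdx i) = X (rowIdx i.succ) := by
  simp [minorVars, rowIdx, i.isLt]

theorem minorVars_colIdx (X : Fin (2 * (n + 1)) → α) (j : Fin n) :
    minorVars X (colIdx j) = X (colIdx j.succ) := by
  simp only [minorVars, colIdx, Fin.val_succ, show ¬n + j.1 < n by omega, if_false]
  congr 2
  omega

end MinorVars

section Weights

variable {n : ℕ} (a : ℂ) (X : Fin (2 * (n + 1)) → ℂ)

theorem weight_zero_zero_eq_zero {M : Fin (n + 1) → Fin (n + 1) → ASMEntry}
    (h : IsASMFun (n + 1) M) (h00 : (M 0 0 : ℤ) ≠ 1)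
    (hspec : X (rowIdx 0) = a⁻¹ * X (colIdx 0)) (hX : X (colIdx 0) ≠ 0) :
    weight a X M 0 0 = 0 := by
  rw [weight, if_neg (by simpa using h.corner_eq_zero_of_ne_one h00),
    if_neg (by simp [Fin.sum_Iic_zero]), hspec, ← mul_assoc, mul_div_assoc, div_self hX,
    mul_one, sig_mul_inv_self]

variable {X} (M : Fin n → Fin n → ASMEntry)

theorem weight_cornerExtend_zero (hspec : X (rowIdx 0) = a⁻¹ * X (colIdx 0))
    (hX : X (colIdx 0) ≠ 0) (j : Fin (n + 1)) :
    weight a X (cornerExtend M) 0 j = sig (a ^ 2 * X (colIdx j) / X (colIdx 0)) := by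
  cases j using Fin.cases with
  | zero => rw [weight, if_pos (by simp), mul_div_assoc, div_self hX, mul_one]
  | succ j =>
    rw [weight, if_neg (by simp),
      if_pos (by simp [cornerExtend_rowSum_zero, Fin.sum_Iic_zero]), hspec]
    congr 1
    simp only [div_eq_mul_inv, mul_inv, inv_inv]
    ring

theorem weight_cornerExtend_succ_zero (i : Fin n) :
    weight a X (cornerExtend M) i.succ 0 = sig (a * X (colIdx 0) / X (rowIdx i.succ)) := by
  rw [weight, if_neg (by simp), if_pos (by simp [cornerExtend_colSum_zero, Fin.sum_Iic_zero])]

theorem weight_cornerExtend_succ_succ (i j : Fin n) :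
    weight a X (cornerExtend M) i.succ j.succ = weight a (minorVars X) M i j := by
  rw [weight, weight, cornerExtend_rowSum_succ_succ, cornerExtend_colSum_succ_succ,
    cornerExtend_succ_succ, minorVars_rowIdx, minorVars_colIdx]

theorem prod_weight_cornerExtend (hspec : X (rowIdx 0) = a⁻¹ * X (colIdx 0))
    (hX : X (colIdx 0) ≠ 0) :
    ∏ i, ∏ j, weight a X (cornerExtend M) i j =
      (∏ i : Fin n, sig (a * X (colIdx 0) / X (rowIdx i.succ))) *
      (∏ j, sig (a ^ 2 * X (colIdx j) / X (colIdx 0))) *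
      ∏ i, ∏ j, weight a (minorVars X) M i j := by
  rw [Fin.prod_univ_succ]
  simp only [weight_cornerExtend_zero a M hspec hX,
    Fin.prod_univ_succ fun j => weight a X (cornerExtend M) _ j, weight_cornerExtend_succ_zero,
    weight_cornerExtend_succ_succ, prod_mul_distrib]
  ring

end Weights

theorem Z_succ_eq_sum_cornerExtend (a : ℂ) {n : ℕ} (X : Fin (2 * (n + 1)) → ℂ)
    (hspec : X (rowIdx 0) = a⁻¹ * X (colIdx 0)) (hX : X (colIdx 0) ≠ 0) :
    Z a (n + 1) X = ∑ M : ASMt n, ∏ i, ∏ j, weight a X (cornerExtend M.1) i j := by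
  calc Z a (n + 1) X
      = ∑ M ∈ univ.map ASMt.cornerExtend, ∏ i, ∏ j, weight a X M.1 i j := by
        refine (sum_subset (subset_univ _) fun M _ hM => ?_).symm
        refine prod_eq_zero (mem_univ 0) (prod_eq_zero (mem_univ 0) ?_)
        exact weight_zero_zero_eq_zero a X M.2 (fun h00 => hM (ASMt.mem_map_cornerExtend h00))
          hspec hX
    _ = _ := sum_map _ _ _

/-- Specialization `x₁ = a⁻¹ x_{N+1}` of the partition function:
`Z(N; a⁻¹x_{N+1}, x₂,…,x_{2N}) = Π_{2≤k≤N} σ(a x_{N+1}/x_k) ·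
Π_{N+1≤k≤2N} σ(a² x_k/x_{N+1}) · Z(N-1; x₂,…,x_N, x_{N+2},…,x_{2N})`. -/
theorem Z_specialization_inv_a (N : ℕ) (hN : 1 ≤ N) (a : ℂ)
    (X : Fin (2*N) → ℂ) (hX : ∀ k : Fin (2*N), k.1 ≠ 0 → X k ≠ 0)
    (hspec : X ⟨0, by omega⟩ = a⁻¹ * X ⟨N, by omega⟩) :
    Z a N X =
      (∏ k ∈ Finset.univ.filter (fun k : Fin N => k.1 ≠ 0),
          sig (a * X ⟨N, by omega⟩ / X (rowIdx k))) *
      (∏ k : Fin N, sig (a ^ 2 * X (colIdx k) / X ⟨N, by omega⟩)) *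
      Z a (N - 1) (fun k =>
        if k.1 < N - 1 then X ⟨k.1 + 1, by have := k.isLt; omega⟩
        else X ⟨k.1 + 2, by have := k.isLt; omega⟩) := by
  obtain ⟨n, rfl⟩ : ∃ n, N = n + 1 := ⟨N - 1, by omega⟩
  have hXN : X (colIdx 0) ≠ 0 := hX _ (by simp [colIdx])
  rw [Z_succ_eq_sum_cornerExtend a X hspec hXN]
  simp only [prod_weight_cornerExtend a _ hspec hXN, ← mul_sum]
  rw [Fin.prod_filter_val_ne_zero]
  -- `colIdx 0 = ⟨n + 1, _⟩`, `n + 1 - 1 = n` and `minorVars` unfold definitionally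
  rfl

end
end

section
/- The number of square-ice states of the N×N grid with domain-wall boundary conditions equals A(N), the number of alternating sign matrices of size N. -/
/-- A square-ice state of the `N×N` grid with domain-wall boundary conditions.
It is recorded by a pair `(h, v)` of orientation functions:
`h i j = true` iff the horizontal edge segment just to the left of column `j`
in row `i` points rightwards (`j = 0` is the left half-edge, `j = N` the right
half-edge), and `v i j = true` iff the vertical edge segment just above row `i`
in column `j` points downwards (`i = 0` is the top half-edge, `i = N` the
bottom half-edge).  The conditions say: every vertex has exactly two incoming
edges (hence exactly two outgoing), the left and right boundary half-edges
point toward their vertex, and the top and bottom boundary half-edges point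
away from their vertex. -/
def IceState (N : ℕ) : Type :=
  {hv : (Fin N → Fin (N+1) → Bool) × (Fin (N+1) → Fin N → Bool) //
    (∀ i j : Fin N,
      ((if hv.1 i j.castSucc then 1 else 0) + (if hv.1 i j.succ then 0 else 1) +
       (if hv.2 i.castSucc j then 1 else 0) + (if hv.2 i.succ j then 0 else 1) : ℕ) = 2) ∧
    (∀ i : Fin N, hv.1 i 0 = true) ∧
    (∀ i : Fin N, hv.1 i (Fin.last N) = false) ∧
    (∀ j : Fin N, hv.2 0 j = false) ∧
    (∀ j : Fin N, hv.2 (Fin.last N) j = true)}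

open Finset Matrix

namespace Fin

theorem partialSum_succ_eq_sum_Iic {M : Type*} [AddCommMonoid M] {n : ℕ} (f : Fin n → M)
    (j : Fin n) : partialSum f j.succ = ∑ k ∈ Iic j, f k := by
  rw [partialSum, List.sum_take_ofFn]
  refine sum_congr (Finset.ext fun k => ?_) fun _ _ => rfl
  simp only [mem_filter, mem_univ, mem_Iic, true_and, le_iff_val_le_val, val_succ]
  omega

theorem partialSum_last {M : Type*} [AddCommMonoid M] {n : ℕ} (f : Fin n → M) :
    partialSum f (last n) = ∑ k, f k := by
  simp [partialSum, List.sum_take_ofFn]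

theorem partialSum_sub_eq_sub {G : Type*} [AddCommGroup G] {n : ℕ} (g : Fin (n + 1) → G)
    (t : Fin (n + 1)) : partialSum (fun k => g k.succ - g k.castSucc) t = g t - g 0 := by
  induction t using Fin.induction with
  | zero => simp
  | succ k ih => rw [partialSum_succ, ih]; abel

end Fin

theorem isASM_iff_partialSum {N : ℕ} {M : Matrix (Fin N) (Fin N) ℤ} :
    IsASM N M ↔
      (∀ i t, Fin.partialSum (M i) t = 0 ∨ Fin.partialSum (M i) t = 1) ∧
      (∀ j t, Fin.partialSum (Mᵀ j) t = 0 ∨ Fin.partialSum (Mᵀ j) t = 1) ∧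
      (∀ i, Fin.partialSum (M i) (Fin.last N) = 1) ∧
      (∀ j, Fin.partialSum (Mᵀ j) (Fin.last N) = 1) := by
  constructor
  · rintro ⟨-, hrow, hcol, hrow_sum, hcol_sum⟩
    refine ⟨fun i t => ?_, fun j t => ?_, fun i => ?_, fun j => ?_⟩
    · cases t using Fin.cases with
      | zero => simp
      | succ j => rw [Fin.partialSum_succ_eq_sum_Iic]; exact hrow i j
    · cases t using Fin.cases with
      | zero => simp
      | succ i => rw [Fin.partialSum_succ_eq_sum_Iic]; exact hcol i j
    · rw [Fin.partialSum_last]; exact hrow_sum i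
    · rw [Fin.partialSum_last]; exact hcol_sum j
  · rintro ⟨hrow, hcol, hrow_last, hcol_last⟩
    refine ⟨fun i j => ?_, fun i j => ?_, fun i j => ?_, fun i => ?_, fun j => ?_⟩
    · have hentry := Fin.partialSum_succ (M i) j
      rcases hrow i j.castSucc with h | h <;> rcases hrow i j.succ with h' | h' <;> omega
    · rw [← Fin.partialSum_succ_eq_sum_Iic]; exact hrow i j.succ
    · rw [← Fin.partialSum_succ_eq_sum_Iic]; exact hcol j i.succ
    · rw [← Fin.partialSum_last]; exact hrow_last i
    · rw [← Fin.partialSum_last]; exact hcol_last j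

/-- `a`, `b` say that the left and right edges point right, `c`, `d` that the upper and lower
edges point down. -/
theorem ice_rule_iff (a b c d : Bool) :
    ((if a then 1 else 0) + (if b then 0 else 1) + (if c then 1 else 0) + (if d then 0 else 1) : ℕ)
        = 2 ↔
      ((if a then 1 else 0) - (if b then 1 else 0) : ℤ) =
        (if d then 1 else 0) - (if c then 1 else 0) := by
  cases a <;> cases b <;> cases c <;> cases d <;> decide

theorem ite_eq_zero_eq_one_sub {x : ℤ} (hx : x = 0 ∨ x = 1) :
    (if x = 0 then 1 else 0 : ℤ) = 1 - x := by
  rcases hx with rfl | rfl <;> rfl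

theorem ite_eq_one_eq_self {x : ℤ} (hx : x = 0 ∨ x = 1) :
    (if x = 1 then 1 else 0 : ℤ) = x := by
  rcases hx with rfl | rfl <;> rfl

namespace IceState

variable {N : ℕ}

def toASM (x : IceState N) : Matrix (Fin N) (Fin N) ℤ :=
  fun i j => (if x.1.1 i j.castSucc then 1 else 0) - (if x.1.1 i j.succ then 1 else 0)

theorem toASM_eq_vertical (x : IceState N) (i j : Fin N) :
    x.toASM i j = (if x.1.2 i.succ j then 1 else 0) - (if x.1.2 i.castSucc j then 1 else 0) :=
  (ice_rule_iff _ _ _ _).1 (x.2.1 i j)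

theorem partialSum_toASM_row (x : IceState N) (i : Fin N) (t : Fin (N + 1)) :
    Fin.partialSum (x.toASM i) t = 1 - if x.1.1 i t then 1 else 0 := by
  let g : Fin (N + 1) → ℤ := fun t => 1 - if x.1.1 i t then 1 else 0
  have hrow : x.toASM i = fun k => g k.succ - g k.castSucc :=
    funext fun k => by simp only [toASM, g]; ring
  obtain ⟨-, hleft, -, -, -⟩ := x.2
  rw [hrow, Fin.partialSum_sub_eq_sub g t]
  simp [g, hleft i]

theorem partialSum_toASM_col (x : IceState N) (j : Fin N) (t : Fin (N + 1)) :
    Fin.partialSum (x.toASMᵀ j) t = if x.1.2 t j then 1 else 0 := by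
  let g : Fin (N + 1) → ℤ := fun t => if x.1.2 t j then 1 else 0
  have hcol : x.toASMᵀ j = fun k => g k.succ - g k.castSucc :=
    funext fun k => x.toASM_eq_vertical k j
  obtain ⟨-, -, -, htop, -⟩ := x.2
  rw [hcol, Fin.partialSum_sub_eq_sub g t]
  simp [g, htop j]

theorem toASM_isASM (x : IceState N) : IsASM N x.toASM := by
  obtain ⟨-, -, hright, -, hbottom⟩ := x.2
  refine isASM_iff_partialSum.2 ⟨fun i t => ?_, fun j t => ?_, fun i => ?_, fun j => ?_⟩
  · rw [partialSum_toASM_row]; cases x.1.1 i t <;> simp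
  · rw [partialSum_toASM_col]; cases x.1.2 t j <;> simp
  · rw [partialSum_toASM_row, hright i]; simp
  · rw [partialSum_toASM_col, hbottom j]; simp

def ofASM (M : Matrix (Fin N) (Fin N) ℤ) (hM : IsASM N M) : IceState N :=
  ⟨(fun i t => decide (Fin.partialSum (M i) t = 0),
    fun t j => decide (Fin.partialSum (Mᵀ j) t = 1)), by
    obtain ⟨hrow, hcol, hrow_last, hcol_last⟩ := isASM_iff_partialSum.1 hM
    refine ⟨fun i j => (ice_rule_iff _ _ _ _).2 ?_, fun i => by simp, fun i => by simp [hrow_last],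
      fun j => by simp, fun j => by simp [hcol_last]⟩
    -- both sides of the ice rule telescope to the entry `M i j`
    simp only [decide_eq_true_eq]
    rw [ite_eq_zero_eq_one_sub (hrow i _), ite_eq_zero_eq_one_sub (hrow i _),
      ite_eq_one_eq_self (hcol j _), ite_eq_one_eq_self (hcol j _),
      Fin.partialSum_succ, Fin.partialSum_succ]
    simp only [Matrix.transpose_apply]
    ring⟩

theorem toASM_ofASM (M : Matrix (Fin N) (Fin N) ℤ) (hM : IsASM N M) : (ofASM M hM).toASM = M := by
  obtain ⟨hrow, -, -, -⟩ := isASM_iff_partialSum.1 hM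
  funext i j
  simp only [toASM, ofASM, decide_eq_true_eq]
  rw [ite_eq_zero_eq_one_sub (hrow i _), ite_eq_zero_eq_one_sub (hrow i _), Fin.partialSum_succ]
  ring

theorem ofASM_toASM (x : IceState N) : ofASM x.toASM x.toASM_isASM = x := by
  refine Subtype.ext (Prod.ext (funext₂ fun i t => ?_) (funext₂ fun t j => ?_))
  · simp only [ofASM, partialSum_toASM_row]; cases x.1.1 i t <;> simp
  · simp only [ofASM, partialSum_toASM_col]; cases x.1.2 t j <;> simp

def equivASM (N : ℕ) : IceState N ≃ {M : Matrix (Fin N) (Fin N) ℤ // IsASM N M} where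
  toFun x := ⟨x.toASM, x.toASM_isASM⟩
  invFun M := ofASM M.1 M.2
  left_inv := ofASM_toASM
  right_inv M := Subtype.ext (toASM_ofASM M.1 M.2)

end IceState

/-- The number of square-ice states of the `N×N` grid with domain-wall boundary
conditions equals `A(N)`, the number of ASMs of size `N`. -/
theorem ice_states_eq_ASM_count (N : ℕ) :
    Nat.card (IceState N) = Nat.card {M : Matrix (Fin N) (Fin N) ℤ // IsASM N M} :=
  Nat.card_congr (IceState.equivASM N)
end

section
/- For every integer N ≥ 1, every nonzero complex number a and all fixed nonzero complex x₂,…,x_{2N}, the function x ↦ Z(N; x, x₂,…,x_{2N}) is a centered Laurent polynomial in x of half-width at most N−1 and of fixed parity: there exist complex coefficients c_k, for integers k with |k| ≤ N−1 and k ≡ N−1 (mod 2), such that Z(N; x, x₂,…,x_{2N}) = Σ_k c_k x^k for all nonzero x. -/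
noncomputable section

/-!
Only the weights in the first row depend on `x = x₁`. The column partial sums at row `0` are the
entries themselves, so the first row of an ASM is a unit vector: it has exactly `N - 1` zeros.
At each of them the weight is `σ(c·x)` or `σ(c/x)`, a combination of `x` and `x⁻¹`, while every
other weight is independent of `x`. So each term of `Z` is a Laurent polynomial in `x` supported
on exponents `k` with `|k| ≤ N - 1` and `k ≡ N - 1 (mod 2)`, and such supports add up correctly
under products, because `|k₁ + k₂| ≤ d₁ + d₂` and `(k₁ - d₁) + (k₂ - d₂) = (k₁ + k₂) - (d₁ + d₂)`.
-/

open LaurentPolynomial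
open scoped Pointwise

def centeredExponents (d : ℕ) : Set ℤ := {k | |k| ≤ d ∧ 2 ∣ k - d}

lemma zero_mem_centeredExponents : (0 : ℤ) ∈ centeredExponents 0 := by
  simp [centeredExponents]

lemma one_mem_centeredExponents : (1 : ℤ) ∈ centeredExponents 1 := by
  simp [centeredExponents]

lemma neg_one_mem_centeredExponents : (-1 : ℤ) ∈ centeredExponents 1 := by
  norm_num [centeredExponents]

lemma centeredExponents_add_subset (d₁ d₂ : ℕ) :
    centeredExponents d₁ + centeredExponents d₂ ⊆ centeredExponents (d₁ + d₂) := by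
  rintro _ ⟨k₁, ⟨hk₁, hp₁⟩, k₂, ⟨hk₂, hp₂⟩, rfl⟩
  refine ⟨(abs_add_le k₁ k₂).trans (by push_cast; linarith), ?_⟩
  have hsplit : k₁ + k₂ - ((d₁ + d₂ : ℕ) : ℤ) = (k₁ - d₁) + (k₂ - d₂) := by push_cast; ring
  exact hsplit ▸ dvd_add hp₁ hp₂

lemma LaurentPolynomial.eval₂_eq_sum {R S : Type*} [CommSemiring R] [CommSemiring S]
    (f : R →+* S) (x : Sˣ) (p : R[T;T⁻¹]) :
    eval₂ f x p = p.coeff.sum fun k r => f r * ↑(x ^ k) := by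
  induction p using LaurentPolynomial.induction_on' with
  | add p q hp hq =>
    rw [map_add, hp, hq, AddMonoidAlgebra.coeff_add,
      Finsupp.sum_add_index' (by simp) (by simp [add_mul])]
  | C_mul_T n r =>
    rw [eval₂_C_mul_T, ← single_eq_C_mul_T, AddMonoidAlgebra.coeff_single,
      Finsupp.sum_single_index (by simp)]

section CommRing

variable {K : Type*} [CommRing K]

def IsCenteredLaurent (d : ℕ) (f : K → K) : Prop :=
  ∃ p : K[T;T⁻¹], ↑p.coeff.support ⊆ centeredExponents d ∧
    ∀ x : Kˣ, f x = eval₂ (RingHom.id K) x p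

lemma isCenteredLaurent_const (c : K) : IsCenteredLaurent 0 (fun _ : K => c) := by
  refine ⟨C c, ?_, fun x => by simp⟩
  rw [← single_eq_C, AddMonoidAlgebra.coeff_single]
  exact (Finset.coe_subset.2 Finsupp.support_single_subset).trans
    (by simpa using zero_mem_centeredExponents)

lemma IsCenteredLaurent.mul {d₁ d₂ : ℕ} {f g : K → K} (hf : IsCenteredLaurent d₁ f)
    (hg : IsCenteredLaurent d₂ g) : IsCenteredLaurent (d₁ + d₂) (fun x => f x * g x) := by
  obtain ⟨p, hp, hpf⟩ := hf
  obtain ⟨q, hq, hqg⟩ := hg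
  refine ⟨p * q, ?_, fun x => by rw [map_mul, ← hpf, ← hqg]⟩
  calc ((p * q).coeff.support : Set ℤ)
      ⊆ ↑(p.coeff.support + q.coeff.support) :=
        Finset.coe_subset.2 (AddMonoidAlgebra.support_coeff_mul_subset p q)
    _ ⊆ centeredExponents d₁ + centeredExponents d₂ := by
        rw [Finset.coe_add]; exact Set.add_subset_add hp hq
    _ ⊆ centeredExponents (d₁ + d₂) := centeredExponents_add_subset d₁ d₂

lemma IsCenteredLaurent.add {d : ℕ} {f g : K → K} (hf : IsCenteredLaurent d f)
    (hg : IsCenteredLaurent d g) : IsCenteredLaurent d (fun x => f x + g x) := by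
  obtain ⟨p, hp, hpf⟩ := hf
  obtain ⟨q, hq, hqg⟩ := hg
  refine ⟨p + q, ?_, fun x => by rw [map_add, ← hpf, ← hqg]⟩
  rw [AddMonoidAlgebra.coeff_add]
  exact (Finset.coe_subset.2 Finsupp.support_add).trans (by simpa using ⟨hp, hq⟩)

lemma isCenteredLaurent_prod {ι : Type*} (s : Finset ι) (d : ι → ℕ) (f : ι → K → K)
    (h : ∀ i ∈ s, IsCenteredLaurent (d i) (f i)) :
    IsCenteredLaurent (∑ i ∈ s, d i) (fun x => ∏ i ∈ s, f i x) := by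
  induction s using Finset.cons_induction with
  | empty => simpa using isCenteredLaurent_const (1 : K)
  | cons i s hi ih =>
    simp only [Finset.sum_cons, Finset.prod_cons]
    exact (h i (s.mem_cons_self i)).mul (ih fun j hj => h j (Finset.mem_cons_of_mem hj))

lemma isCenteredLaurent_sum {ι : Type*} (s : Finset ι) (d : ℕ) (f : ι → K → K)
    (h : ∀ i ∈ s, IsCenteredLaurent d (f i)) :
    IsCenteredLaurent d (fun x => ∑ i ∈ s, f i x) := by
  induction s using Finset.cons_induction with
  | empty => exact ⟨0, by simp, fun x => by simp⟩
  | cons i s hi ih =>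
    simp only [Finset.sum_cons]
    exact (h i (s.mem_cons_self i)).add (ih fun j hj => h j (Finset.mem_cons_of_mem hj))

end CommRing

section Field

variable {K : Type*} [Field K]

lemma isCenteredLaurent_linear (α β : K) :
    IsCenteredLaurent 1 (fun x : K => α * x + β * x⁻¹) := by
  refine ⟨C α * T 1 + C β * T (-1), ?_, fun x => by simp⟩
  rw [← single_eq_C_mul_T, ← single_eq_C_mul_T, AddMonoidAlgebra.coeff_add,
    AddMonoidAlgebra.coeff_single, AddMonoidAlgebra.coeff_single]
  refine (Finset.coe_subset.2 Finsupp.support_add).trans ?_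
  simp only [Finset.coe_union, Set.union_subset_iff]
  exact ⟨(Finset.coe_subset.2 Finsupp.support_single_subset).trans
      (by simpa using one_mem_centeredExponents),
    (Finset.coe_subset.2 Finsupp.support_single_subset).trans
      (by simpa using neg_one_mem_centeredExponents)⟩

lemma IsCenteredLaurent.exists_eq_sum {d : ℕ} {f : K → K}
    (hf : IsCenteredLaurent d f) :
    ∃ c : ℤ → K, (∀ k, c k ≠ 0 → |k| ≤ d ∧ 2 ∣ k - d) ∧
      ∀ x ≠ 0, f x = ∑ k ∈ Finset.Icc (-d : ℤ) d, c k * x ^ k := by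
  obtain ⟨p, hp, hpf⟩ := hf
  have hsupp : p.coeff.support ⊆ Finset.Icc (-d : ℤ) d := fun k hk => by
    simpa [← abs_le] using (hp hk).1
  refine ⟨p.coeff, fun k hk => hp (Finsupp.mem_support_iff.2 hk), fun x hx => ?_⟩
  rw [← Units.val_mk0 hx, hpf, eval₂_eq_sum, Finsupp.sum_of_support_subset _ hsupp _ (by simp)]
  simp

end Field

lemma isCenteredLaurent_sig_mul (c : ℂ) : IsCenteredLaurent 1 (fun x => sig (c * x)) := by
  have h : (fun x => sig (c * x)) = fun x => c * x + -c⁻¹ * x⁻¹ := by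
    funext x; rw [sig, mul_inv]; ring
  exact h ▸ isCenteredLaurent_linear c (-c⁻¹)

lemma isCenteredLaurent_sig_div (c : ℂ) : IsCenteredLaurent 1 (fun x => sig (c / x)) := by
  have h : (fun x => sig (c / x)) = fun x => -c⁻¹ * x + c * x⁻¹ := by
    funext x; rw [sig, inv_div]; ring
  exact h ▸ isCenteredLaurent_linear (-c⁻¹) c

def withFirstVar {N : ℕ} (X : Fin (2*N) → ℂ) (x : ℂ) : Fin (2*N) → ℂ :=
  fun m => if m.1 = 0 then x else X m

section withFirstVar

variable {N : ℕ} (X : Fin (2*N) → ℂ) (x : ℂ)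

lemma withFirstVar_rowIdx_zero [NeZero N] : withFirstVar X x (rowIdx 0) = x := by
  simp [withFirstVar, rowIdx]

lemma withFirstVar_rowIdx_of_ne_zero [NeZero N] {i : Fin N} (hi : i ≠ 0) :
    withFirstVar X x (rowIdx i) = X (rowIdx i) :=
  if_neg fun h => hi (Fin.ext (by simpa [rowIdx] using h))

lemma withFirstVar_colIdx (j : Fin N) : withFirstVar X x (colIdx j) = X (colIdx j) :=
  if_neg fun h => by simp [colIdx] at h; omega

end withFirstVar

lemma weight_withFirstVar_of_ne_zero (a : ℂ) {N : ℕ} [NeZero N] (X : Fin (2*N) → ℂ) (x : ℂ)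
    (M : Fin N → Fin N → ASMEntry) {i : Fin N} (hi : i ≠ 0) (j : Fin N) :
    weight a (withFirstVar X x) M i j = weight a X M i j := by
  simp only [weight, withFirstVar_rowIdx_of_ne_zero X x hi, withFirstVar_colIdx]

lemma isCenteredLaurent_weight_zero_row (a : ℂ) {N : ℕ} [NeZero N] (X : Fin (2*N) → ℂ)
    (M : Fin N → Fin N → ASMEntry) (j : Fin N) :
    IsCenteredLaurent (if (M 0 j : ℤ) = 0 then 1 else 0)
      (fun x => weight a (withFirstVar X x) M 0 j) := by
  simp only [weight, withFirstVar_rowIdx_zero, withFirstVar_colIdx]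
  by_cases h0 : (M 0 j : ℤ) = 0
  · by_cases hc : ∑ k ∈ Finset.Iic j, (M 0 k : ℤ) = ∑ k ∈ Finset.Iic 0, (M k j : ℤ)
    · simp only [h0, hc, ne_eq, not_true_eq_false, if_false, if_true, mul_div_right_comm a]
      exact isCenteredLaurent_sig_mul _
    · simp only [h0, hc, ne_eq, not_true_eq_false, not_false_eq_true, if_false, if_true]
      exact isCenteredLaurent_sig_div _
  · simp only [h0, ne_eq, not_false_eq_true, if_true, if_false]
    exact isCenteredLaurent_const _

namespace ASMt

variable {N : ℕ} [NeZero N] (M : ASMt N)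

lemma firstRow_eq_zero_or_one (j : Fin N) : (M.1 0 j : ℤ) = 0 ∨ (M.1 0 j : ℤ) = 1 := by
  have hIic : Finset.Iic (0 : Fin N) = {0} := by ext k; simp
  simpa [hIic] using M.2.2.1 0 j

open Finset in
lemma card_firstRow_eq_zero : #{j | (M.1 0 j : ℤ) = 0} = N - 1 := by
  have hnonzero : #{j | (M.1 0 j : ℤ) ≠ 0} = 1 := by
    have hcast : (#{j | (M.1 0 j : ℤ) ≠ 0} : ℤ) = ∑ j, (M.1 0 j : ℤ) := by
      rw [natCast_card_filter]
      refine sum_congr rfl fun j _ => ?_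
      rcases M.firstRow_eq_zero_or_one j with h | h <;> simp [h]
    exact_mod_cast hcast.trans (M.2.2.2.1 0)
  have := card_filter_add_card_filter_not (s := univ) fun j => (M.1 0 j : ℤ) = 0
  simp only [hnonzero, card_univ, Fintype.card_fin] at this
  omega

end ASMt

section partitionFunction

variable (a : ℂ) {N : ℕ} [NeZero N] (X : Fin (2*N) → ℂ)

lemma isCenteredLaurent_prod_weight (M : ASMt N) :
    IsCenteredLaurent (N - 1) (fun x => ∏ i, ∏ j, weight a (withFirstVar X x) M.1 i j) := by
  have hfirst : IsCenteredLaurent (N - 1) (fun x => ∏ j, weight a (withFirstVar X x) M.1 0 j) := by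
    have := isCenteredLaurent_prod Finset.univ _ _ fun j _ =>
      isCenteredLaurent_weight_zero_row a X M.1 j
    rwa [Finset.sum_boole, Nat.cast_id, M.card_firstRow_eq_zero] at this
  have hrow (i : Fin N) : IsCenteredLaurent (if i = 0 then N - 1 else 0)
      (fun x => ∏ j, weight a (withFirstVar X x) M.1 i j) := by
    split_ifs with hi
    · exact hi ▸ hfirst
    · simp only [weight_withFirstVar_of_ne_zero a X _ M.1 hi]
      exact isCenteredLaurent_const _
  simpa using isCenteredLaurent_prod Finset.univ _ _ fun i _ => hrow i

lemma isCenteredLaurent_Z : IsCenteredLaurent (N - 1) (fun x => Z a N (withFirstVar X x)) :=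
  isCenteredLaurent_sum Finset.univ _ _ fun M _ => isCenteredLaurent_prod_weight a X M

end partitionFunction

theorem Z_Laurent_in_first_var_general (N : ℕ) (hN : 1 ≤ N) (a : ℂ)
    (X : Fin (2*N) → ℂ) :
    ∃ c : ℤ → ℂ,
      (∀ k : ℤ, c k ≠ 0 → |k| ≤ (N : ℤ) - 1 ∧ (2 : ℤ) ∣ (k - ((N : ℤ) - 1))) ∧
      ∀ x : ℂ, x ≠ 0 →
        Z a N (fun m => if m.1 = 0 then x else X m) =
          ∑ k ∈ Finset.Icc (1 - (N : ℤ)) ((N : ℤ) - 1), c k * x ^ k := by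
  have : NeZero N := ⟨by omega⟩
  obtain ⟨c, hc, hZ⟩ := (isCenteredLaurent_Z a X).exists_eq_sum
  have hd : ((N - 1 : ℕ) : ℤ) = N - 1 := by omega
  refine ⟨c, fun k hk => hd ▸ hc k hk, fun x hx => ?_⟩
  rw [← neg_sub, ← hd]
  exact hZ x hx

/-- As a function of `x = x₁`, the partition function `Z(N; x, x₂,…,x_{2N})` is
a centered Laurent polynomial of half-width at most `N-1` and of the parity of
`N-1`: `Z = Σ_k c_k x^k`, where `c_k = 0` unless `|k| ≤ N-1` and
`k ≡ N-1 (mod 2)`. -/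
theorem Z_Laurent_in_first_var (N : ℕ) (hN : 1 ≤ N) (a : ℂ) (ha : a ≠ 0)
    (X : Fin (2*N) → ℂ) (hX : ∀ k : Fin (2*N), k.1 ≠ 0 → X k ≠ 0) :
    ∃ c : ℤ → ℂ,
      (∀ k : ℤ, c k ≠ 0 → |k| ≤ (N : ℤ) - 1 ∧ (2 : ℤ) ∣ (k - ((N : ℤ) - 1))) ∧
      ∀ x : ℂ, x ≠ 0 →
        Z a N (fun m => if m.1 = 0 then x else X m) =
          ∑ k ∈ Finset.Icc (1 - (N : ℤ)) ((N : ℤ) - 1), c k * x ^ k :=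
  Z_Laurent_in_first_var_general N hN a X

end
end
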